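/- Fix positive reals c_0,...,c_{N-1} and M ≥ N ≥ 1. For u ∈ C^N with pairwise distinct coordinates, the matrix h_c[u u*] = Σ_{j=0}^{N-1} c_j (u u*)^{∘j} is invertible, and (u^{∘M})* h_c[u u*]^{-1} u^{∘M} = Σ_{j=0}^{N-1} |s_{μ(M,N,j)}(u)|^2 / c_j. -/

import Mathlib

open Matrix BigOperators

/-- Complete homogeneous symmetric polynomial `h_k`, as a function of a point `x ∈ F^N`. -/
def hfun {F : Type*} [CommRing F] {N : ℕ} (x : Fin N → F) (k : ℕ) : F :=
  ∑ d ∈ Finset.univ.filter (fun d : Fin N → Fin (k + 1) => ∑ i, (d i : ℕ) = k),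
    ∏ i, x i ^ (d i : ℕ)

/-- Schur polynomial (via the Jacobi–Trudi identity) of the partition `lam`,
evaluated at the point `x ∈ F^N`. -/
def schurAt {F : Type*} [CommRing F] {N : ℕ} (x : Fin N → F) (lam : Fin N → ℕ) : F :=
  Matrix.det (Matrix.of fun i j : Fin N =>
    if (i : ℕ) ≤ lam i + (j : ℕ) then hfun x (lam i + (j : ℕ) - (i : ℕ)) else 0)

/-- The hook partition `μ(M,N,j) = (M-N+1, 1^{N-j-1}, 0^j)`. -/
def hookP (M N j : ℕ) : Fin N → ℕ :=
  fun i => if (i : ℕ) = 0 then M - N + 1 else if (i : ℕ) < N - j then 1 else 0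

/-- Vandermonde determinant `Δ_N(x) = ∏_{i<j} (x_i - x_j)`. -/
def vdm {F : Type*} [CommRing F] {N : ℕ} (x : Fin N → F) : F :=
  ∏ i : Fin N, ∏ j ∈ Finset.Ioi i, (x i - x j)

/-!
Write `V` for the Vandermonde matrix `V i k = u i ^ k`. Then `h_c[u u*] = V diag(c) V*`, so it is
invertible when the `u i` are distinct, and the quadratic form equals `∑ j |w j|² / c j` with
`w = V⁻¹ u^{∘M}`. By Cramer's rule `w j` is a ratio of alternants: replacing column `j` of `V` by
`u^{∘M}` gives, up to a permutation of the exponents, the alternant `a_{μ+δ}` of the hook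
`μ = μ(M,N,j)`, so the bialternant formula `a_{λ+δ} = s_λ a_δ` yields `w j = ± s_μ(u)`. The
bialternant formula comes from the Jacobi–Trudi matrix: multiplying it by the matrix of signed
elementary symmetric polynomials in all variables but one turns it into the alternant, because
`E(t) H(t) = 1` for the generating series of the `e_k` and `h_k`.
-/

open PowerSeries Finset

section Symmetric

variable {R : Type*} [CommRing R] {N : ℕ}

theorem coeff_prod_rescale_mk_one (x : Fin N → R) (k : ℕ) :
    coeff k (∏ i, rescale (x i) (mk 1)) = hfun x k := by
  classical
  rw [coeff_prod, hfun]
  symm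
  have hle : ∀ l ∈ finsuppAntidiag (univ : Finset (Fin N)) k, ∀ i, l i < k + 1 := fun l hl i => by
    rw [mem_finsuppAntidiag] at hl
    exact Nat.lt_succ_of_le (hl.1 ▸ single_le_sum (fun _ _ => Nat.zero_le _) (mem_univ i))
  refine sum_nbij' (fun d => Finsupp.equivFunOnFinite.symm fun i => (d i : ℕ))
    (fun (l : Fin N →₀ ℕ) i => Fin.ofNat (k + 1) (l i)) (fun d hd => by simpa using hd)
    (fun l hl => ?_) (fun d _ => ?_) (fun l hl => ?_) (fun d _ => by simp [coeff_rescale])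
  · have := hle l hl
    rw [mem_finsuppAntidiag] at hl
    simp [Nat.mod_eq_of_lt, this, hl.1]
  · ext i
    simp
  · ext i
    simp [Nat.mod_eq_of_lt, hle l hl]

theorem hfun_zero (x : Fin N → R) : hfun x 0 = 1 := by
  rw [← coeff_prod_rescale_mk_one, coeff_zero_eq_constantCoeff_apply, map_prod]
  exact prod_eq_one fun i _ => by simp [← coeff_zero_eq_constantCoeff_apply, coeff_rescale]

theorem one_sub_C_mul_X_mul_rescale_mk_one (a : R) : (1 - C a * X) * rescale a (mk 1) = 1 := by
  simpa [rescale_X, mul_comm] using congrArg (rescale a) (mk_one_mul_one_sub_eq_one (S := R))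

theorem coeff_prod_one_sub_C_mul_X_of_card_lt {ι : Type*} [DecidableEq ι] (s : Finset ι)
    (a : ι → R) {k : ℕ} (hk : #s < k) : coeff k (∏ i ∈ s, (1 - C (a i) * X)) = 0 := by
  rw [coeff_prod]
  refine sum_eq_zero fun l hl => ?_
  rw [mem_finsuppAntidiag] at hl
  obtain ⟨i, hi, hli⟩ : ∃ i ∈ s, 1 < l i :=
    exists_lt_of_sum_lt (by simpa [hl.1] using hk)
  refine prod_eq_zero hi ?_
  rw [map_sub, coeff_one, coeff_C_mul, coeff_X]
  rw [if_neg (by omega), if_neg hli.ne', mul_zero, sub_zero]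

theorem prod_erase_one_sub_mul_prod_rescale (x : Fin N → R) (r : Fin N) :
    (∏ i ∈ univ.erase r, (1 - C (x i) * X)) * ∏ i, rescale (x i) (mk 1) =
      rescale (x r) (mk 1) := by
  rw [← mul_prod_erase univ _ (mem_univ r), mul_left_comm, ← prod_mul_distrib]
  simp [one_sub_C_mul_X_mul_rescale_mk_one]

theorem sum_range_coeff_prod_erase_mul_hfun (x : Fin N → R) (r : Fin N) (d : ℕ) :
    ∑ k ∈ range N, (if k ≤ d then
      coeff k (∏ i ∈ univ.erase r, (1 - C (x i) * X)) * hfun x (d - k) else 0) = x r ^ d := by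
  have hcoeff := congrArg (coeff d) (prod_erase_one_sub_mul_prod_rescale x r)
  rw [coeff_mul, Nat.sum_antidiagonal_eq_sum_range_succ_mk, coeff_rescale] at hcoeff
  simp only [coeff_prod_rescale_mk_one, coeff_mk, Pi.one_apply, mul_one] at hcoeff
  rw [← hcoeff, ← sum_filter]
  refine sum_subset (fun k => by simp) fun k hk hkN => ?_
  rw [coeff_prod_one_sub_C_mul_X_of_card_lt, zero_mul]
  simp only [mem_range, mem_filter, not_and, not_le] at hk hkN
  rw [card_erase_of_mem (mem_univ r), card_univ, Fintype.card_fin]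
  have := r.pos
  by_contra h
  exact absurd (hkN (by omega)) (by omega)

end Symmetric

section Bialternant

variable {R : Type*} [CommRing R] {N : ℕ}

def jacobiTrudi (x : Fin N → R) (lam : Fin N → ℕ) : Matrix (Fin N) (Fin N) R :=
  of fun i j => if (i : ℕ) ≤ lam i + j then hfun x (lam i + j - i) else 0

/-- Entry `(j, r)` is `(-1)^(N-1-j) e_{N-1-j}` of the variables `x i`, `i ≠ r`. -/
noncomputable def signedElemMatrix (x : Fin N → R) : Matrix (Fin N) (Fin N) R :=
  of fun j r => coeff (N - 1 - j) (∏ i ∈ univ.erase r, (1 - C (x i) * X))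

def alternant (x : Fin N → R) (e : Fin N → ℕ) : Matrix (Fin N) (Fin N) R :=
  of fun i r => x r ^ e i

theorem jacobiTrudi_mul_signedElemMatrix (x : Fin N → R) (lam : Fin N → ℕ) :
    jacobiTrudi x lam * signedElemMatrix x = alternant x fun i => lam i + (N - 1 - i) := by
  ext i r
  simp only [mul_apply, jacobiTrudi, signedElemMatrix, alternant, of_apply]
  rw [Fin.sum_univ_eq_sum_range (fun j => (if (i : ℕ) ≤ lam i + j then hfun x (lam i + j - i)
    else 0) * coeff (N - 1 - j) (∏ i ∈ univ.erase r, (1 - C (x i) * X))), ← sum_range_reflect,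
    ← sum_range_coeff_prod_erase_mul_hfun]
  refine sum_congr rfl fun k hk => ?_
  have := i.isLt
  rw [mem_range] at hk
  rw [show N - 1 - (N - 1 - k) = k by omega]
  split_ifs with h₁ h₂ h₂
  · rw [mul_comm, show lam i + (N - 1 - k) - i = lam i + (N - 1 - i) - k by omega]
  · omega
  · omega
  · rw [zero_mul]

theorem det_jacobiTrudi_zero (x : Fin N → R) : (jacobiTrudi x 0).det = 1 := by
  rw [det_of_isUpperTriangular]
  · exact prod_eq_one fun i _ => by simp [jacobiTrudi, hfun_zero]
  · intro i j hji
    exact if_neg (by simpa using hji)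

theorem schurAt_mul_det_alternant (x : Fin N → R) (lam : Fin N → ℕ) :
    schurAt x lam * (alternant x fun i => N - 1 - i).det =
      (alternant x fun i => lam i + (N - 1 - i)).det := by
  have h₀ := jacobiTrudi_mul_signedElemMatrix x 0
  simp only [Pi.zero_apply, zero_add] at h₀
  rw [← h₀, ← jacobiTrudi_mul_signedElemMatrix, det_mul, det_mul, det_jacobiTrudi_zero, one_mul]
  rfl

theorem det_alternant_comp_perm (x : Fin N → R) (e : Fin N → ℕ) (σ : Equiv.Perm (Fin N)) :
    (alternant x (e ∘ σ)).det = Equiv.Perm.sign σ * (alternant x e).det :=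
  det_permute σ (alternant x e)

theorem updateCol_vandermonde_pow (x : Fin N → R) (j : Fin N) (M : ℕ) :
    (vandermonde x).updateCol j (fun i => x i ^ M) =
      (alternant x (Function.update (fun k : Fin N => (k : ℕ)) j M))ᵀ := by
  ext i k
  by_cases hk : k = j
  · subst hk; simp [alternant]
  · simp [alternant, hk]

end Bialternant

section Hook

variable {N M : ℕ}

theorem exists_perm_hookP_add (hMN : N ≤ M) (j : Fin N) :
    ∃ σ : Equiv.Perm (Fin N), (fun i : Fin N => hookP M N j i + (N - 1 - i)) =
      Function.update (fun k : Fin N => (k : ℕ)) j M ∘ σ := by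
  -- the exponents `μ_i + (N - 1 - i)` are `M, N - 1, …, j + 1, j - 1, …, 0`
  let g : Fin N → Fin N := fun i =>
    ⟨if (i : ℕ) = 0 then j else if (i : ℕ) < N - j then N - i else N - 1 - i, by
      split_ifs <;> omega⟩
  have hg : Function.Injective g := fun i₁ i₂ h => by
    simp only [g, Fin.mk.injEq] at h
    ext
    split_ifs at h <;> omega
  refine ⟨Equiv.ofBijective g (Finite.injective_iff_bijective.mp hg), funext fun i => ?_⟩
  simp only [hookP, Function.comp_apply, Equiv.ofBijective_apply, Function.update_apply, g,
    Fin.ext_iff]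
  split_ifs <;> omega

theorem det_updateCol_vandermonde_pow {R : Type*} [CommRing R] (x : Fin N → R) (hMN : N ≤ M)
    (j : Fin N) : ∃ ε : ℤˣ, ((vandermonde x).updateCol j fun i => x i ^ M).det =
      ε * (schurAt x (hookP M N j) * (vandermonde x).det) := by
  obtain ⟨σ, hσ⟩ := exists_perm_hookP_add hMN j
  have hrev : (fun i : Fin N => N - 1 - (i : ℕ)) = (fun k : Fin N => (k : ℕ)) ∘ Fin.revPerm :=
    funext fun i => by simp [Fin.val_rev]; omega
  have hbialt := schurAt_mul_det_alternant x (hookP M N j)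
  rw [hσ, det_alternant_comp_perm, hrev, det_alternant_comp_perm] at hbialt
  have hsq : ((σ.sign : ℤ) : R) * (σ.sign : ℤ) = 1 := by
    rw [← Int.cast_mul, ← Units.val_mul, Int.units_mul_self, Units.val_one, Int.cast_one]
  refine ⟨σ.sign * (Fin.revPerm : Equiv.Perm (Fin N)).sign, ?_⟩
  rw [updateCol_vandermonde_pow, det_transpose, ← det_transpose (vandermonde x),
    show (vandermonde x)ᵀ = alternant x fun k => (k : ℕ) from rfl]
  push_cast
  linear_combination (-(σ.sign : ℤ) : R) * hbialt - (alternant x _).det * hsq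

end Hook

theorem sum_smul_of_mul_star_pow_eq_vandermonde {R : Type*} [CommRing R] [StarRing R] {N : ℕ}
    (u c : Fin N → R) :
    ∑ j : Fin N, c j • of (fun i k : Fin N => (u i * starRingEnd R (u k)) ^ (j : ℕ)) =
      vandermonde u * diagonal c * (vandermonde u)ᴴ := by
  ext i k
  rw [mul_apply]
  simp only [Matrix.sum_apply, Matrix.smul_apply, of_apply, smul_eq_mul, mul_diagonal,
    conjTranspose_apply, vandermonde_apply, star_pow, starRingEnd_apply]
  exact sum_congr rfl fun j _ => by ring

section RayleighQuotient

variable {n : Type*} [Fintype n] [DecidableEq n]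

theorem star_dotProduct_inv_mulVec_of_diagonal {K : Type*} [Field K] [StarRing K]
    (V : Matrix n n K) {d : n → K} (hd : ∀ j, d j ≠ 0) (b : n → K) :
    star b ⬝ᵥ (V * diagonal d * Vᴴ)⁻¹ *ᵥ b =
      ∑ j, star ((V⁻¹ *ᵥ b) j) * ((d j)⁻¹ * (V⁻¹ *ᵥ b) j) := by
  have hdinv : (diagonal d)⁻¹ = diagonal d⁻¹ :=
    inv_eq_right_inv (by simp [diagonal_mul_diagonal, hd])
  rw [Matrix.mul_inv_rev, Matrix.mul_inv_rev, hdinv, ← conjTranspose_nonsing_inv, ← mulVec_mulVec,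
    ← mulVec_mulVec, dotProduct_mulVec, ← star_mulVec]
  simp [dotProduct, mulVec_diagonal]

theorem inv_mulVec_apply_eq_det_updateCol_div {K : Type*} [Field K] (V : Matrix n n K)
    (hV : V.det ≠ 0) (b : n → K) (j : n) :
    (V⁻¹ *ᵥ b) j = (V.updateCol j b).det / V.det := by
  rw [eq_div_iff hV, mul_comm, ← cramer_apply, ← det_smul_inv_mulVec_eq_cramer V b hV.isUnit]
  rfl

end RayleighQuotient

theorem rayleigh_rank_one_schur_general (N M : ℕ) (hMN : N ≤ M)
    (c : Fin N → ℝ) (hc : ∀ j, 0 < c j) (u : Fin N → ℂ) (hu : Function.Injective u) :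
    IsUnit (Matrix.det (∑ j : Fin N, (c j : ℂ) •
        Matrix.of fun i k : Fin N => (u i * (starRingEnd ℂ) (u k)) ^ (j : ℕ))) ∧
      dotProduct (star fun i : Fin N => u i ^ M)
        ((∑ j : Fin N, (c j : ℂ) •
            Matrix.of fun i k : Fin N => (u i * (starRingEnd ℂ) (u k)) ^ (j : ℕ))⁻¹.mulVec
          fun i : Fin N => u i ^ M) =
      ((∑ j : Fin N, ‖schurAt u (hookP M N (j : ℕ))‖ ^ 2 / c j : ℝ) : ℂ) := by
  have hV : (vandermonde u).det ≠ 0 := det_vandermonde_ne_zero_iff.mpr hu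
  have hc₀ : ∀ j, (c j : ℂ) ≠ 0 := fun j => Complex.ofReal_ne_zero.mpr (hc j).ne'
  rw [sum_smul_of_mul_star_pow_eq_vandermonde u fun j => (c j : ℂ)]
  refine ⟨?_, ?_⟩
  · rw [det_mul, det_mul, det_diagonal, det_conjTranspose]
    exact isUnit_iff_ne_zero.mpr (by simp [hV, hc₀, prod_ne_zero_iff])
  · rw [star_dotProduct_inv_mulVec_of_diagonal _ hc₀, Complex.ofReal_sum]
    refine sum_congr rfl fun j _ => ?_
    obtain ⟨ε, hε⟩ := det_updateCol_vandermonde_pow u hMN j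
    rw [inv_mulVec_apply_eq_det_updateCol_div _ hV, hε, mul_div_assoc, mul_div_cancel_right₀ _ hV,
      mul_left_comm, Complex.star_def, Complex.conj_mul', norm_mul, Complex.norm_intCast,
      abs_unit_intCast, one_mul]
    push_cast
    ring

/-- Closed form for the generalized Rayleigh quotient of Hadamard powers on a rank-one
matrix: `h_c[u u*]` is invertible and
`(u^{∘M})* h_c[u u*]⁻¹ u^{∘M} = Σ_j |s_{μ(M,N,j)}(u)|² / c_j`. -/
theorem rayleigh_rank_one_schur (N M : ℕ) (hN : 1 ≤ N) (hMN : N ≤ M)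
    (c : Fin N → ℝ) (hc : ∀ j, 0 < c j) (u : Fin N → ℂ) (hu : Function.Injective u) :
    IsUnit (Matrix.det (∑ j : Fin N, (c j : ℂ) •
        Matrix.of fun i k : Fin N => (u i * (starRingEnd ℂ) (u k)) ^ (j : ℕ))) ∧
      dotProduct (star fun i : Fin N => u i ^ M)
        ((∑ j : Fin N, (c j : ℂ) •
            Matrix.of fun i k : Fin N => (u i * (starRingEnd ℂ) (u k)) ^ (j : ℕ))⁻¹.mulVec
          fun i : Fin N => u i ^ M) =
      ((∑ j : Fin N, ‖schurAt u (hookP M N (j : ℕ))‖ ^ 2 / c j : ℝ) : ℂ) :=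
  rayleigh_rank_one_schur_general N M hMN c hc u hu
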